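/- The quadrilateral formed from a right isosceles triangle by adding a vertex at the midpoint of its hypotenuse minimizes the longest edge-length among unit-area quadrilaterals having an interior angle equal to π. -/

import Mathlib

open Finset

noncomputable section

abbrev Pt : Type := EuclideanSpace ℝ (Fin 2)

def cross2 (p q : Pt) : ℝ := p 0 * q 1 - p 1 * q 0

def perimeter {n : ℕ} [NeZero n] (v : Fin n → Pt) : ℝ :=
  ∑ i, dist (v i) (v (i + 1))

def shoelace {n : ℕ} [NeZero n] (v : Fin n → Pt) : ℝ :=
  (∑ i, (v i 0 * v (i + 1) 1 - v (i + 1) 0 * v i 1)) / 2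

def polyArea {n : ℕ} [NeZero n] (v : Fin n → Pt) : ℝ := |shoelace v|

def IsSimplePolygon {n : ℕ} [NeZero n] (v : Fin n → Pt) : Prop :=
  Function.Injective v ∧
  (∀ i : Fin n,
    segment ℝ (v i) (v (i + 1)) ∩ segment ℝ (v (i + 1)) (v (i + 1 + 1)) = {v (i + 1)}) ∧
  (∀ i j : Fin n, j ≠ i → j ≠ i + 1 → j + 1 ≠ i →
    segment ℝ (v i) (v (i + 1)) ∩ segment ℝ (v j) (v (j + 1)) = ∅)

/-- A simple, positively (counterclockwise) oriented polygon. -/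
def IsPolygon {n : ℕ} [NeZero n] (v : Fin n → Pt) : Prop :=
  IsSimplePolygon v ∧ 0 < shoelace v

/-- Interior angle at vertex `i` of a positively oriented simple polygon:
the unoriented angle at a convex (left-turn) vertex, and its reflex complement
at a right-turn vertex. -/
def interiorAngle {n : ℕ} [NeZero n] (v : Fin n → Pt) (i : Fin n) : ℝ :=
  if 0 ≤ cross2 (v i - v (i - 1)) (v (i + 1) - v i) then
    EuclideanGeometry.angle (v (i - 1)) (v i) (v (i + 1))
  else 2 * Real.pi - EuclideanGeometry.angle (v (i - 1)) (v i) (v (i + 1))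

def IsConvexPolygon {n : ℕ} [NeZero n] (v : Fin n → Pt) : Prop :=
  IsPolygon v ∧ ∀ i, interiorAngle v i ≤ Real.pi

/-- The polygon is circumscribed about a circle: every edge is tangent to a
common circle of radius `r` centered at `c`. -/
def IsCircumscribed {n : ℕ} [NeZero n] (v : Fin n → Pt) : Prop :=
  ∃ c : Pt, ∃ r : ℝ, 0 < r ∧
    ∀ i : Fin n, Metric.infDist c (segment ℝ (v i) (v (i + 1))) = r

/-- The polygon is inscribed in a circle: all vertices lie on a common circle. -/
def IsInscribed {n : ℕ} [NeZero n] (v : Fin n → Pt) : Prop :=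
  ∃ c : Pt, ∃ r : ℝ, ∀ i : Fin n, dist c (v i) = r

def longestEdge {n : ℕ} [NeZero n] (v : Fin n → Pt) : ℝ :=
  Finset.univ.sup' Finset.univ_nonempty (fun i => dist (v i) (v (i + 1)))

/-! A vertex with interior angle `π` lies on the segment joining its neighbours, so the
quadrilateral has the same area as the triangle formed by the other three vertices, whose two
sides at the opposite vertex are edges of the quadrilateral. Hence `1 ≤ a * b / 2 ≤ L ^ 2 / 2`
for the longest edge `L`, i.e. `√2 ≤ L`; the right isosceles triangle with legs `√2`, with the
midpoint of its hypotenuse as extra vertex, attains this bound. -/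

section Segments

variable {E : Type*} [AddCommGroup E] [Module ℝ E]

theorem segment_inter_segment_eq_singleton_of_lt_of_le (ℓ : E →ₗ[ℝ] ℝ) {a b c : E}
    (hab : ℓ a < ℓ b) (hbc : ℓ b ≤ ℓ c) :
    segment ℝ a b ∩ segment ℝ b c = {b} := by
  refine Set.Subset.antisymm (fun x ⟨hxab, hxbc⟩ => ?_)
    (Set.singleton_subset_iff.2 ⟨right_mem_segment ℝ a b, left_mem_segment ℝ b c⟩)
  have hx : ℓ b ≤ ℓ x :=
    (convex_halfSpace_ge ℓ.isLinear (ℓ b)).segment_subset (le_refl (ℓ b)) hbc hxbc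
  rw [segment_eq_image'] at hxab
  obtain ⟨θ, ⟨-, hθ⟩, rfl⟩ := hxab
  have hθ1 : θ = 1 := by
    simp only [map_add, map_smul, map_sub, smul_eq_mul] at hx
    nlinarith
  simp [hθ1]

theorem segment_inter_segment_eq_empty_of_separated (ℓ : E →ₗ[ℝ] ℝ) {a b c d : E}
    {r : ℝ} (ha : ℓ a < r) (hb : ℓ b < r) (hc : r ≤ ℓ c) (hd : r ≤ ℓ d) :
    segment ℝ a b ∩ segment ℝ c d = ∅ :=
  Set.eq_empty_of_forall_notMem fun _ ⟨hab, hcd⟩ =>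
    (show ℓ _ < r from (convex_halfSpace_lt ℓ.isLinear r).segment_subset ha hb hab).not_ge
      (show r ≤ ℓ _ from (convex_halfSpace_ge ℓ.isLinear r).segment_subset hc hd hcd)

end Segments

section Polygons

variable {n : ℕ} [NeZero n]

theorem dist_le_longestEdge (v : Fin n → Pt) (i : Fin n) :
    dist (v i) (v (i + 1)) ≤ longestEdge v :=
  Finset.le_sup' (fun i => dist (v i) (v (i + 1))) (Finset.mem_univ i)

theorem longestEdge_comp_add_right (v : Fin n → Pt) (k : Fin n) :
    longestEdge (fun j => v (j + k)) = longestEdge v := by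
  apply le_antisymm <;> refine Finset.sup'_le _ _ fun j _ => ?_
  · simpa only [add_right_comm j 1 k] using dist_le_longestEdge v (j + k)
  · simpa only [sub_add_cancel, sub_add_eq_add_sub] using
      dist_le_longestEdge (fun j => v (j + k)) (j - k)

theorem shoelace_comp_add_right (v : Fin n → Pt) (k : Fin n) :
    shoelace (fun j => v (j + k)) = shoelace v := by
  unfold shoelace
  congr 1
  simp only [add_right_comm _ 1 k]
  exact Fintype.sum_equiv (Equiv.addRight k) _ _ fun _ => rfl

theorem polyArea_comp_add_right (v : Fin n → Pt) (k : Fin n) :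
    polyArea (fun j => v (j + k)) = polyArea v := by
  rw [polyArea, polyArea, shoelace_comp_add_right]

theorem angle_eq_pi_of_interiorAngle_eq_pi {v : Fin n → Pt} {i : Fin n}
    (h : interiorAngle v i = Real.pi) :
    EuclideanGeometry.angle (v (i - 1)) (v i) (v (i + 1)) = Real.pi := by
  unfold interiorAngle at h
  split_ifs at h <;> linarith

end Polygons

theorem abs_cross2_le (p q : Pt) : |cross2 p q| ≤ ‖p‖ * ‖q‖ := by
  rw [← Real.sqrt_sq_eq_abs, ← Real.sqrt_sq (norm_nonneg p), ← Real.sqrt_sq (norm_nonneg q),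
    ← Real.sqrt_mul (sq_nonneg _)]
  refine Real.sqrt_le_sqrt ?_
  simp only [EuclideanSpace.real_norm_sq_eq, Fin.sum_univ_two, cross2]
  nlinarith [sq_nonneg (p 0 * q 0 + p 1 * q 1)]

/-- Triangulating from `w 3`, the two triangles' signed areas add up to that of `w 0, w 2, w 3`
because `w 1` lies on the diagonal `w 0 w 2`. -/
theorem shoelace_eq_cross2_of_mem_segment {w : Fin 4 → Pt}
    (h : w 1 ∈ segment ℝ (w 0) (w 2)) :
    shoelace w = cross2 (w 0 - w 3) (w 2 - w 3) / 2 := by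
  rw [segment_eq_image'] at h
  obtain ⟨θ, -, hθ⟩ := h
  have h0 : w 1 0 = w 0 0 + θ * (w 2 0 - w 0 0) := by rw [← hθ]; simp
  have h1 : w 1 1 = w 0 1 + θ * (w 2 1 - w 0 1) := by rw [← hθ]; simp
  simp only [shoelace, cross2, Fin.sum_univ_four, PiLp.sub_apply, zero_add,
    show (1 : Fin 4) + 1 = 2 from rfl, show (2 : Fin 4) + 1 = 3 from rfl,
    show (3 : Fin 4) + 1 = 0 from rfl, h0, h1]
  ring

theorem polyArea_le_of_mem_segment {w : Fin 4 → Pt} (h : w 1 ∈ segment ℝ (w 0) (w 2)) :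
    polyArea w ≤ longestEdge w ^ 2 / 2 := by
  have h23 := dist_le_longestEdge w 2
  have h30 := dist_le_longestEdge w 3
  simp only [show (2 : Fin 4) + 1 = 3 from rfl, show (3 : Fin 4) + 1 = 0 from rfl] at h23 h30
  calc polyArea w = |cross2 (w 0 - w 3) (w 2 - w 3)| / 2 := by
        rw [polyArea, shoelace_eq_cross2_of_mem_segment h, abs_div, abs_two]
    _ ≤ dist (w 3) (w 0) * dist (w 2) (w 3) / 2 := by
        rw [dist_comm (w 3), dist_eq_norm, dist_eq_norm]
        gcongr
        exact abs_cross2_le _ _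
    _ ≤ longestEdge w * longestEdge w / 2 := by
        gcongr
        exact dist_nonneg.trans h30
    _ = longestEdge w ^ 2 / 2 := by ring

theorem sqrt_two_le_longestEdge {v : Fin 4 → Pt} (hA : polyArea v = 1) {i : Fin 4}
    (hi : interiorAngle v i = Real.pi) : Real.sqrt 2 ≤ longestEdge v := by
  set w : Fin 4 → Pt := fun j => v (j + (i - 1))
  have hw : w 1 ∈ segment ℝ (w 0) (w 2) := by
    have := (EuclideanGeometry.angle_eq_pi_iff_sbtw.1
      (angle_eq_pi_of_interiorAngle_eq_pi hi)).wbtw.mem_segment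
    simpa only [w, zero_add, add_sub_cancel, show (2 : Fin 4) + (i - 1) = i + 1 by grind] using this
  have := polyArea_le_of_mem_segment hw
  rw [polyArea_comp_add_right, hA, longestEdge_comp_add_right] at this
  rw [Real.sqrt_le_iff]
  exact ⟨dist_nonneg.trans (dist_le_longestEdge v 0), by linarith⟩

def rightIsoscelesQuad : Fin 4 → Pt := ![!₂[1, -1], !₂[1, 0], !₂[1, 1], !₂[0, 0]]

theorem shoelace_rightIsoscelesQuad : shoelace rightIsoscelesQuad = 1 := by
  simp [shoelace, Fin.sum_univ_four, rightIsoscelesQuad]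

theorem isPolygon_rightIsoscelesQuad : IsPolygon rightIsoscelesQuad := by
  refine ⟨⟨fun a b hab => ?_, fun i => ?_, fun i j hi hi' hj => ?_⟩, ?_⟩
  · -- `2x + y` takes the values `1, 2, 3, 0` on the vertices
    have := congrArg (innerₗ Pt !₂[2, 1]) hab
    fin_cases a <;> fin_cases b <;>
      simp [rightIsoscelesQuad, PiLp.inner_apply, Fin.sum_univ_two] at this ⊢ <;> norm_num at this
  · fin_cases i <;>
      [apply segment_inter_segment_eq_singleton_of_lt_of_le (innerₗ Pt !₂[0, 1]);
       apply segment_inter_segment_eq_singleton_of_lt_of_le (innerₗ Pt !₂[-1, 1]);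
       apply segment_inter_segment_eq_singleton_of_lt_of_le (innerₗ Pt !₂[-1, -1]);
       apply segment_inter_segment_eq_singleton_of_lt_of_le (innerₗ Pt !₂[2, 1])] <;>
      simp [rightIsoscelesQuad, PiLp.inner_apply, Fin.sum_univ_two, -inner_self_eq_norm_sq_to_K]
  · obtain rfl : j = i + 2 := by grind
    fin_cases i <;>
      [apply segment_inter_segment_eq_empty_of_separated (innerₗ Pt !₂[-1, 1]) (r := -1/2);
       apply segment_inter_segment_eq_empty_of_separated (innerₗ Pt !₂[-1, -1]) (r := -1/2);
       apply segment_inter_segment_eq_empty_of_separated (innerₗ Pt !₂[1, -1]) (r := 1/2);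
       apply segment_inter_segment_eq_empty_of_separated (innerₗ Pt !₂[1, 1]) (r := 1/2)] <;>
      simp [rightIsoscelesQuad, PiLp.inner_apply, Fin.sum_univ_two, -inner_self_eq_norm_sq_to_K] <;>
      norm_num
  · rw [shoelace_rightIsoscelesQuad]
    exact one_pos

theorem polyArea_rightIsoscelesQuad : polyArea rightIsoscelesQuad = 1 := by
  rw [polyArea, shoelace_rightIsoscelesQuad, abs_one]

theorem rightIsoscelesQuad_one_eq_midpoint :
    rightIsoscelesQuad 1 = midpoint ℝ (rightIsoscelesQuad 0) (rightIsoscelesQuad 2) := by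
  ext j
  fin_cases j <;> norm_num [rightIsoscelesQuad, midpoint_eq_smul_add, Matrix.cons_val_two]

theorem interiorAngle_rightIsoscelesQuad_one : interiorAngle rightIsoscelesQuad 1 = Real.pi := by
  rw [interiorAngle, show (1 : Fin 4) - 1 = 0 from rfl, show (1 : Fin 4) + 1 = 2 from rfl, if_pos]
  · rw [rightIsoscelesQuad_one_eq_midpoint]
    exact EuclideanGeometry.angle_midpoint_eq_pi _ _
      (isPolygon_rightIsoscelesQuad.1.1.ne (by decide))
  · simp [cross2, rightIsoscelesQuad]

theorem longestEdge_rightIsoscelesQuad : longestEdge rightIsoscelesQuad = Real.sqrt 2 := by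
  refine le_antisymm (Finset.sup'_le _ _ fun i _ => ?_) ?_
  · fin_cases i <;> simp [rightIsoscelesQuad, EuclideanSpace.dist_eq, Fin.sum_univ_two] <;>
      norm_num
  · simpa [rightIsoscelesQuad, EuclideanSpace.dist_eq, Fin.sum_univ_two, one_add_one_eq_two] using
      dist_le_longestEdge rightIsoscelesQuad 2

theorem stmt7 :
    ∃ Q : Fin 4 → Pt, IsPolygon Q ∧ polyArea Q = 1 ∧
      -- Q is a right isosceles triangle `Q 0, Q 2, Q 3` (right angle at `Q 3`)
      -- with an extra vertex `Q 1` at the midpoint of the hypotenuse: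
      dist (Q 3) (Q 0) = dist (Q 3) (Q 2) ∧
      inner ℝ (Q 0 - Q 3) (Q 2 - Q 3) = (0 : ℝ) ∧
      Q 1 = midpoint ℝ (Q 0) (Q 2) ∧
      interiorAngle Q 1 = Real.pi ∧
      ∀ v : Fin 4 → Pt, IsPolygon v → polyArea v = 1 →
        (∃ i, interiorAngle v i = Real.pi) → longestEdge Q ≤ longestEdge v := by
  refine ⟨rightIsoscelesQuad, isPolygon_rightIsoscelesQuad, polyArea_rightIsoscelesQuad,
    ?_, ?_, rightIsoscelesQuad_one_eq_midpoint, interiorAngle_rightIsoscelesQuad_one,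
    fun v _ hA ⟨i, hi⟩ => ?_⟩
  · simp [rightIsoscelesQuad, EuclideanSpace.dist_eq, Fin.sum_univ_two]
  · simp [rightIsoscelesQuad, PiLp.inner_apply, Fin.sum_univ_two]
  · rw [longestEdge_rightIsoscelesQuad]
    exact sqrt_two_le_longestEdge hA hi

end
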